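/- In Z/2[w_1, w_2, w_3], let \bar{w}_i denote the degree-i homogeneous component of (1 + w_1 + w_2 + w_3)^{-1} (with deg w_j = j). Then for every t \geq 3, there is no identity of the form \bar{w}_{2^t - 3} = w_1 · \bar{w}_{2^t - 4} in Z/2[w_1,w_2,w_3]. -/
import Mathlib


open MvPolynomial

/-- The ring `𝔽₂[ε]/(ε²)` of dual numbers over `ℤ/2`. -/
structure D2 where
  a : ZMod 2
  b : ZMod 2
deriving DecidableEq, Fintype

instance : Add D2 := ⟨fun x y => ⟨x.a + y.a, x.b + y.b⟩⟩
instance : Mul D2 := ⟨fun x y => ⟨x.a * y.a, x.a * y.b + x.b * y.a⟩⟩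
instance : Neg D2 := ⟨id⟩
instance : Zero D2 := ⟨⟨0, 0⟩⟩
instance : One D2 := ⟨⟨1, 0⟩⟩

instance : CommRing D2 where
  add := (· + ·)
  mul := (· * ·)
  neg := (- ·)
  zero := 0
  one := 1
  add_assoc := by decide
  zero_add := by decide
  add_zero := by decide
  add_comm := by decide
  left_distrib := by decide
  right_distrib := by decide
  zero_mul := by decide
  mul_zero := by decide
  mul_assoc := by decide
  one_mul := by decide
  mul_one := by decide
  neg_add_cancel := by decide
  mul_comm := by decide
  nsmul := nsmulRec
  zsmul := zsmulRec

/-- The unique ring hom `ZMod 2 →+* D2`. -/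
def fD : ZMod 2 →+* D2 where
  toFun x := ⟨x, 0⟩
  map_one' := by decide
  map_mul' := by decide
  map_zero' := by decide
  map_add' := by decide

/-- The evaluation point: `w₁ ↦ 1`, `w₂ ↦ 1`, `w₃ ↦ 1 + ε`. -/
def gD : ℕ → D2 := fun n => if n = 3 then ⟨1, 1⟩ else ⟨1, 0⟩

/-- In `ℤ/2[w₁, w₂, w₃]` (here `X j` denotes `w_j`), let `w̄ i` be the degree-`i`
homogeneous component of `(1 + w₁ + w₂ + w₃)⁻¹`, i.e. `w̄ 0 = 1` and
`w̄ i = w₁ w̄_{i-1} + w₂ w̄_{i-2} + w₃ w̄_{i-3}` for `i ≥ 1` (with `w̄_j = 0` for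
`j < 0`).  Then for every `t ≥ 3` one never has `w̄ (2^t - 3) = w₁ · w̄ (2^t - 4)`. -/
theorem wbar_ne_w1_mul_wbar
    (wb : ℕ → MvPolynomial ℕ (ZMod 2))
    (h0 : wb 0 = 1)
    (h1 : wb 1 = X 1 * wb 0)
    (h2 : wb 2 = X 1 * wb 1 + X 2 * wb 0)
    (hrec : ∀ i : ℕ, wb (i + 3) = X 1 * wb (i + 2) + X 2 * wb (i + 1) + X 3 * wb i) :
    ∀ t : ℕ, 3 ≤ t → wb (2 ^ t - 3) ≠ X 1 * wb (2 ^ t - 4) := by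
  intro t ht heq
  set φ : MvPolynomial ℕ (ZMod 2) →+* D2 := eval₂Hom fD gD with hφ
  set a : ℕ → D2 := fun n => φ (wb n) with ha
  have hg1 : φ (X 1) = ⟨1, 0⟩ := by rw [hφ, eval₂Hom_X']; rfl
  have hg2 : φ (X 2) = ⟨1, 0⟩ := by rw [hφ, eval₂Hom_X']; rfl
  have hg3 : φ (X 3) = ⟨1, 1⟩ := by rw [hφ, eval₂Hom_X']; rfl
  have arec : ∀ i, a (i + 3) =
      (⟨1, 0⟩ : D2) * a (i + 2) + (⟨1, 0⟩ : D2) * a (i + 1) + (⟨1, 1⟩ : D2) * a i := by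
    intro i
    show φ (wb (i + 3)) = _
    rw [hrec, map_add, map_add, map_mul, map_mul, map_mul, hg1, hg2, hg3]
  have e0 : a 0 = ⟨1, 0⟩ := by
    show φ (wb 0) = _
    rw [h0, map_one]
    decide
  have e1 : a 1 = ⟨1, 0⟩ := by
    show φ (wb 1) = _
    rw [h1, map_mul, hg1, show φ (wb 0) = ⟨1, 0⟩ from e0]
    decide
  have e2 : a 2 = ⟨0, 0⟩ := by
    show φ (wb 2) = _
    rw [h2, map_add, map_mul, map_mul, hg1, hg2,
      show φ (wb 0) = ⟨1, 0⟩ from e0, show φ (wb 1) = ⟨1, 0⟩ from e1]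
    decide
  have e3 : a 3 = ⟨0, 1⟩ := by rw [arec 0, e0, e1, e2]; decide
  have e4 : a 4 = ⟨1, 0⟩ := by rw [arec 1, e1, e2, e3]; decide
  have e5 : a 5 = ⟨1, 1⟩ := by rw [arec 2, e2, e3, e4]; decide
  have e6 : a 6 = ⟨0, 0⟩ := by rw [arec 3, e3, e4, e5]; decide
  have e7 : a 7 = ⟨0, 0⟩ := by rw [arec 4, e4, e5, e6]; decide
  have e8 : a 8 = ⟨1, 0⟩ := by rw [arec 5, e5, e6, e7]; decide
  have e9 : a 9 = ⟨1, 0⟩ := by rw [arec 6, e6, e7, e8]; decide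
  have e10 : a 10 = ⟨0, 0⟩ := by rw [arec 7, e7, e8, e9]; decide
  have per : ∀ n, a (n + 8) = a n := by
    intro n
    induction n using Nat.strong_induction_on with
    | _ n ih =>
      match n, ih with
      | 0, _ => rw [e8, e0]
      | 1, _ => rw [e9, e1]
      | 2, _ => rw [e10, e2]
      | (m + 3), ih =>
        have i0 := ih m (by omega)
        have i1 := ih (m + 1) (by omega)
        have i2 := ih (m + 2) (by omega)
        have hL := arec (m + 8)
        have hR := arec m
        rw [show m + 3 + 8 = m + 8 + 3 by omega, hL, hR,
          show m + 8 + 2 = m + 2 + 8 by omega, show m + 8 + 1 = m + 1 + 8 by omega,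
          i0, i1, i2]
  have perm : ∀ m n, a (n + 8 * m) = a n := by
    intro m
    induction m with
    | zero => intro n; rfl
    | succ m ih =>
      intro n
      have h1 : n + 8 * (m + 1) = (n + 8 * m) + 8 := by ring
      rw [h1, per (n + 8 * m), ih n]
  have h8 : 2 ^ t = 8 * 2 ^ (t - 3) := by
    have ht' : t - 3 + 3 = t := by omega
    calc 2 ^ t = 2 ^ (t - 3 + 3) := by rw [ht']
    _ = 2 ^ (t - 3) * 2 ^ 3 := by rw [pow_add]
    _ = 8 * 2 ^ (t - 3) := by ring
  have hm1 : (1 : ℕ) ≤ 2 ^ (t - 3) := Nat.one_le_two_pow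
  have hA : 2 ^ t - 3 = 5 + 8 * (2 ^ (t - 3) - 1) := by omega
  have hB : 2 ^ t - 4 = 4 + 8 * (2 ^ (t - 3) - 1) := by omega
  have hEq : a (2 ^ t - 3) = φ (X 1) * a (2 ^ t - 4) := by
    show φ (wb (2 ^ t - 3)) = _
    rw [heq, map_mul]
  rw [hA, hB, perm (2 ^ (t - 3) - 1) 5, perm (2 ^ (t - 3) - 1) 4, e5, e4, hg1] at hEq
  exact absurd hEq (by decide)
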